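/- Every idempotent polymorphism (of any arity) of the partially reflexive path P_{10α01} is a projection. -/

import Mathlib

/-!
A polymorphism `f` is `1`-Lipschitz along the coordinatewise shift towards the looped vertex `0`.
On `{0, 1}`-tuples it takes values in `{0, 1}`, and the sets `s` with `f 1ₛ = 1` form an
ultrafilter: two of them cannot be disjoint because `1` has no loop, and shifting by `n - 2`
compares `{0, 1}`-tuples with `{n - 2, n - 1}`-tuples, where the loopless vertex `n - 2` plays the
same role; this yields both the complement dichotomy and closure under intersection. Over a finite
index set the ultrafilter is principal, at some coordinate `i`. An induction on the largest entry
then shows `f t = 0` whenever `t i = 0`, so `f t ≤ t i` after shifting. Reversing the path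
preserves the pattern `10α01`, giving `t i' ≤ f t`, and a tuple with `t i = 0`, `t i' = n - 1`
forces `i = i'`.
-/

/-- Edge relation of the partially reflexive path on `Fin n` with loops given by `β`. -/
def pathEdge (n : ℕ) (β : Fin n → Bool) (x y : Fin n) : Prop :=
  x.val + 1 = y.val ∨ y.val + 1 = x.val ∨ (x = y ∧ β x = true)

section PathEdge

variable {n : ℕ} {β : Fin n → Bool} {x y : Fin n}

lemma pathEdge.val_le (h : pathEdge n β x y) : x.val ≤ y.val + 1 := by
  rcases h with h | h | ⟨rfl, _⟩ <;> omega

lemma pathEdge.symm (h : pathEdge n β x y) : pathEdge n β y x := by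
  rcases h with h | h | ⟨rfl, h⟩
  exacts [Or.inr (Or.inl h), Or.inl h, Or.inr (Or.inr ⟨rfl, h⟩)]

lemma pathEdge.ne_of_not_loop (h : pathEdge n β x y) (hy : β y = false) : x ≠ y := by
  rintro rfl
  rcases h with h | h | ⟨-, h⟩
  · omega
  · omega
  · simp [hy] at h

lemma pathEdge_rev_iff : pathEdge n β x.rev y.rev ↔ pathEdge n (β ∘ Fin.rev) x y := by
  have hx := x.isLt
  have hy := y.isLt
  simp only [pathEdge, Fin.val_rev, Fin.rev_inj, Function.comp_apply]
  constructor <;> rintro (h | h | h) <;> first | exact Or.inr (Or.inr h) | omega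

end PathEdge

section Polymorphism

variable {n : ℕ} {β : Fin n → Bool} {ι : Type*} {f : (ι → Fin n) → Fin n}

def IsPolymorphism (β : Fin n → Bool) (f : (ι → Fin n) → Fin n) : Prop :=
  ∀ x y : ι → Fin n, (∀ j, pathEdge n β (x j) (y j)) → pathEdge n β (f x) (f y)

def reverse (f : (ι → Fin n) → Fin n) : (ι → Fin n) → Fin n :=
  fun t => (f (Fin.rev ∘ t)).rev

@[simp] lemma reverse_rev_comp (t : ι → Fin n) : reverse f (Fin.rev ∘ t) = (f t).rev := by
  simp [reverse, Function.comp_def]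

lemma IsPolymorphism.reverse (hf : IsPolymorphism β f) :
    IsPolymorphism (β ∘ Fin.rev) (reverse f) := fun x y hxy =>
  pathEdge_rev_iff.mp <| by
    simpa [_root_.reverse, Function.comp_def] using hf _ _ fun j => pathEdge_rev_iff.mpr (hxy j)

lemma reverse_const (hidem : ∀ v, f (fun _ => v) = v) (v : Fin n) :
    reverse f (fun _ => v) = v := by
  simp [reverse, Function.comp_def, hidem]

end Polymorphism

-- On `Fin (n + 4)` the last two vertices of the path are `Fin.rev 0` and `Fin.rev 1`.
structure Pattern10α01 {n : ℕ} (β : Fin (n + 4) → Bool) : Prop where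
  loop_zero : β 0 = true
  not_loop_one : β 1 = false
  not_loop_rev_one : β (Fin.rev 1) = false
  loop_rev_zero : β (Fin.rev 0) = true

namespace Pattern10α01

variable {n : ℕ} {β : Fin (n + 4) → Bool}

lemma reverse (hβ : Pattern10α01 β) : Pattern10α01 (β ∘ Fin.rev) :=
  ⟨by simpa using hβ.loop_rev_zero, by simpa using hβ.not_loop_rev_one,
    by simpa using hβ.not_loop_one, by simpa using hβ.loop_zero⟩

lemma pathEdge_of_val (hβ : Pattern10α01 β) {x y : Fin (n + 4)}
    (h : x.val + 1 = y.val ∨ y.val + 1 = x.val ∨ (x.val = y.val ∧ (x.val = 0 ∨ x.val = n + 3))) :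
    pathEdge (n + 4) β x y := by
  rcases h with h | h | ⟨hxy, hx⟩
  · exact Or.inl h
  · exact Or.inr (Or.inl h)
  · refine Or.inr (Or.inr ⟨Fin.ext hxy, ?_⟩)
    rcases hx with hx | hx
    · simpa [show x = 0 from Fin.ext hx] using hβ.loop_zero
    · simpa [show x = Fin.rev 0 from Fin.ext (by simp [hx])] using hβ.loop_rev_zero

end Pattern10α01

section Pattern

variable {n : ℕ} {β : Fin (n + 4) → Bool} {ι : Type*} {f : (ι → Fin (n + 4)) → Fin (n + 4)}

def shiftDown (m : ℕ) (t : ι → Fin (n + 4)) : ι → Fin (n + 4) :=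
  fun j => ⟨(t j).val - m, by omega⟩

@[simp] lemma shiftDown_val (m : ℕ) (t : ι → Fin (n + 4)) (j : ι) :
    (shiftDown m t j).val = (t j).val - m := rfl

lemma val_apply_le_val_apply_shiftDown_add (hβ : Pattern10α01 β) (hf : IsPolymorphism β f)
    (t : ι → Fin (n + 4)) (m : ℕ) : (f t).val ≤ (f (shiftDown m t)).val + m := by
  induction m with
  | zero => exact le_rfl
  | succ m ih =>
    have hstep : pathEdge (n + 4) β (f (shiftDown m t)) (f (shiftDown (m + 1) t)) :=
      hf _ _ fun j => hβ.pathEdge_of_val (by simp; omega)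
    have := hstep.val_le
    omega

open Classical in
noncomputable def indicatorTuple (s : Set ι) : ι → Fin (n + 4) := s.piecewise 1 0

open Classical in
lemma indicatorTuple_apply (s : Set ι) (j : ι) :
    indicatorTuple (n := n) s j = if j ∈ s then 1 else 0 := rfl

lemma apply_indicatorTuple_eq_zero_or_one (hβ : Pattern10α01 β) (hf : IsPolymorphism β f)
    (hidem : ∀ v, f (fun _ => v) = v) (s : Set ι) :
    f (indicatorTuple s) = 0 ∨ f (indicatorTuple s) = 1 := by
  have h := hf (indicatorTuple s) (fun _ => 0) fun j => hβ.pathEdge_of_val (by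
    by_cases hj : j ∈ s <;> simp [indicatorTuple_apply, hj])
  rw [hidem] at h
  have := h.val_le
  simp only [Fin.ext_iff, Fin.val_zero, Fin.val_one] at this ⊢
  omega

lemma not_disjoint_of_apply_indicatorTuple_eq_one (hβ : Pattern10α01 β) (hf : IsPolymorphism β f)
    {s t : Set ι} (hs : f (indicatorTuple s) = 1) (ht : f (indicatorTuple t) = 1) :
    ¬ Disjoint s t := by
  intro hst
  have h := hf (indicatorTuple s) (indicatorTuple t) fun j => hβ.pathEdge_of_val (by
    by_cases hjs : j ∈ s <;> by_cases hjt : j ∈ t <;> simp [indicatorTuple_apply, hjs, hjt]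
    exact Set.disjoint_left.mp hst hjs hjt)
  rw [hs, ht] at h
  exact h.ne_of_not_loop hβ.not_loop_one rfl

lemma apply_indicatorTuple_eq_one_of_shiftDown (hβ : Pattern10α01 β) (hf : IsPolymorphism β f)
    (hidem : ∀ v, f (fun _ => v) = v) {t : ι → Fin (n + 4)} {s : Set ι}
    (hts : shiftDown (n + 2) t = indicatorTuple s) (ht : f t = Fin.rev 0) :
    f (indicatorTuple s) = 1 := by
  have := val_apply_le_val_apply_shiftDown_add hβ hf t (n + 2)
  rw [ht, hts] at this
  refine (apply_indicatorTuple_eq_zero_or_one hβ hf hidem s).resolve_left fun h => ?_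
  simp [h] at this

lemma apply_indicatorTuple_compl_eq_one (hβ : Pattern10α01 β) (hf : IsPolymorphism β f)
    (hidem : ∀ v, f (fun _ => v) = v) {s : Set ι}
    (hs : f (Fin.rev ∘ indicatorTuple s) = Fin.rev 0) : f (indicatorTuple sᶜ) = 1 :=
  apply_indicatorTuple_eq_one_of_shiftDown hβ hf hidem (funext fun j => by
    ext; by_cases hj : j ∈ s <;> simp [indicatorTuple_apply, hj]) hs

lemma apply_rev_comp_indicatorTuple_of_ne_one (hβ : Pattern10α01 β) (hf : IsPolymorphism β f)
    (hidem : ∀ v, f (fun _ => v) = v) {s : Set ι} (hs : f (indicatorTuple s) ≠ 1) :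
    f (Fin.rev ∘ indicatorTuple s) = Fin.rev 0 ∧
      f (Fin.rev ∘ indicatorTuple sᶜ) = Fin.rev 1 := by
  have hs0 := (apply_indicatorTuple_eq_zero_or_one hβ hf hidem s).resolve_right hs
  have hcompl : f (Fin.rev ∘ indicatorTuple sᶜ) = Fin.rev 1 := Fin.rev_eq_iff.mp <|
    apply_indicatorTuple_compl_eq_one hβ.reverse hf.reverse (reverse_const hidem) (by simp [hs0])
  refine ⟨?_, hcompl⟩
  rcases apply_indicatorTuple_eq_zero_or_one hβ.reverse hf.reverse (reverse_const hidem) s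
    with h | h
  · exact Fin.rev_eq_iff.mp h
  · exact absurd disjoint_compl_right <| not_disjoint_of_apply_indicatorTuple_eq_one hβ.reverse
      hf.reverse h (by simp [reverse, hcompl])

open Classical in
lemma apply_indicatorTuple_inter_eq_one (hβ : Pattern10α01 β) (hf : IsPolymorphism β f)
    (hidem : ∀ v, f (fun _ => v) = v) {s t : Set ι} (hs : f (indicatorTuple s) = 1)
    (ht : f (indicatorTuple t) = 1) : f (indicatorTuple (s ∩ t)) = 1 := by
  have hsdiff := apply_rev_comp_indicatorTuple_of_ne_one hβ hf hidem (s := s \ t) fun h =>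
    not_disjoint_of_apply_indicatorTuple_eq_one hβ hf h ht Set.disjoint_sdiff_left
  have hcompl := apply_rev_comp_indicatorTuple_of_ne_one hβ hf hidem (s := sᶜ) fun h =>
    not_disjoint_of_apply_indicatorTuple_eq_one hβ hf hs h disjoint_compl_right
  -- `g` is adjacent to a tuple sent to the loopless `rev 1` and to one sent to `rev 0`,
  -- which pins `f g = rev 0`; shifting it down by `n + 2` leaves the indicator of `s ∩ t`.
  let g : ι → Fin (n + 4) := fun j =>
    if j ∈ s then (if j ∈ t then Fin.rev 0 else Fin.rev 1) else Fin.rev 2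
  have h1 := hf g (Fin.rev ∘ indicatorTuple (s \ t)ᶜ) fun j => hβ.pathEdge_of_val (by
    by_cases hjs : j ∈ s <;> by_cases hjt : j ∈ t <;>
      simp [g, indicatorTuple_apply, hjs, hjt, Nat.mod_eq_of_lt])
  have h2 := hf g (Fin.rev ∘ indicatorTuple sᶜ) fun j => hβ.pathEdge_of_val (by
    by_cases hjs : j ∈ s <;> by_cases hjt : j ∈ t <;>
      simp [g, indicatorTuple_apply, hjs, hjt, Nat.mod_eq_of_lt])
  rw [hsdiff.2] at h1
  rw [hcompl.1] at h2
  have hg : f g = Fin.rev 0 := by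
    have hne := h1.ne_of_not_loop hβ.not_loop_rev_one
    have hle := h1.val_le
    have hge := h2.symm.val_le
    have := (f g).isLt
    simp only [ne_eq, Fin.ext_iff, Fin.val_rev, Fin.val_one, Fin.val_zero] at hne hle hge ⊢
    omega
  refine apply_indicatorTuple_eq_one_of_shiftDown hβ hf hidem (funext fun j => ?_) hg
  ext
  by_cases hjs : j ∈ s <;> by_cases hjt : j ∈ t <;>
    simp [g, indicatorTuple_apply, hjs, hjt, Nat.mod_eq_of_lt]

lemma exists_apply_indicatorTuple_eq_one_iff [Finite ι] (hβ : Pattern10α01 β)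
    (hf : IsPolymorphism β f) (hidem : ∀ v, f (fun _ => v) = v) :
    ∃ i, ∀ s : Set ι, f (indicatorTuple s) = 1 ↔ i ∈ s := by
  have hdisj {s t : Set ι} := not_disjoint_of_apply_indicatorTuple_eq_one hβ hf (s := s) (t := t)
  have hcompl {s : Set ι} (hs : f (indicatorTuple s) ≠ 1) : f (indicatorTuple sᶜ) = 1 :=
    apply_indicatorTuple_compl_eq_one hβ hf hidem
      (apply_rev_comp_indicatorTuple_of_ne_one hβ hf hidem hs).1
  let F : Filter ι :=
    { sets := {s | f (indicatorTuple s) = 1}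
      univ_sets := by
        show f (indicatorTuple Set.univ) = 1
        simp only [indicatorTuple, Set.piecewise_univ]
        exact hidem 1
      sets_of_superset := fun {s t} hs hst => by_contra fun ht =>
        hdisj hs (hcompl ht) (Set.disjoint_compl_right_iff_subset.mpr hst)
      inter_sets := apply_indicatorTuple_inter_eq_one hβ hf hidem }
  have hF (s : Set ι) : sᶜ ∉ F ↔ s ∈ F :=
    ⟨fun h => show f (indicatorTuple s) = 1 by simpa using hcompl h,
      fun hs h => hdisj hs h disjoint_compl_right⟩
  obtain ⟨i, hi⟩ := (Ultrafilter.ofComplNotMemIff F hF).eq_pure_of_finite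
  exact ⟨i, fun s => by rw [← Ultrafilter.mem_pure, ← hi]; rfl⟩

lemma apply_ne_zero_of_ne_zero (hβ : Pattern10α01 β) (hf : IsPolymorphism β f)
    (hidem : ∀ v, f (fun _ => v) = v) {i : ι} (hU : ∀ s, f (indicatorTuple s) = 1 ↔ i ∈ s)
    {t : ι → Fin (n + 4)} (ht : t i ≠ 0) : f t ≠ 0 := by
  let z : Set ι := {j | t j = 0}
  have hz : f (Fin.rev ∘ indicatorTuple z) = Fin.rev 0 :=
    (apply_rev_comp_indicatorTuple_of_ne_one hβ hf hidem (s := z) (by simpa [hU, z] using ht)).1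
  have hshift : shiftDown (n + 2) (Fin.rev ∘ t) = indicatorTuple z := by
    funext j
    ext
    by_cases hj : t j = 0
    · simp [indicatorTuple_apply, z, hj]
    · have : 0 < (t j).val := Fin.pos_of_ne_zero hj
      simp [indicatorTuple_apply, z, hj]
      omega
  have := val_apply_le_val_apply_shiftDown_add hβ.reverse hf.reverse (Fin.rev ∘ t) (n + 2)
  rw [hshift, reverse_rev_comp] at this
  intro h
  simp [reverse, hz, h] at this

lemma apply_eq_zero_of_eq_zero (hβ : Pattern10α01 β) (hf : IsPolymorphism β f)
    (hidem : ∀ v, f (fun _ => v) = v) {i : ι} (hU : ∀ s, f (indicatorTuple s) = 1 ↔ i ∈ s)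
    {t : ι → Fin (n + 4)} (ht : t i = 0) : f t = 0 := by
  suffices ∀ M, ∀ t : ι → Fin (n + 4), (∀ j, (t j).val ≤ M) → t i = 0 → f t = 0 from
    this _ t (fun j => (t j).isLt.le) ht
  intro M
  induction M with
  | zero =>
    intro t hbound _
    rw [show t = fun _ => 0 from funext fun j => Fin.ext (by simpa using hbound j), hidem]
  | succ M ih =>
    intro t hbound hti
    have hle {s : ι → Fin (n + 4)} (hs : ∀ j, (s j).val ≤ M + 1) (hsi : (s i).val ≤ 1) :
        (f s).val ≤ 1 := by
      have := val_apply_le_val_apply_shiftDown_add hβ hf s 1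
      rwa [ih (shiftDown 1 s) (fun j => by simp; have := hs j; omega)
        (Fin.ext (by simp; omega))] at this
    -- a neighbour of `t` on which `f` is forced to take the loopless value `1`
    let r : ι → Fin (n + 4) := fun j => if t j = 0 then 1 else shiftDown 1 t j
    have hr : f r = 1 := by
      have hr0 := apply_ne_zero_of_ne_zero hβ hf hidem hU (t := r) (by simp [r, hti])
      have hr1 := hle (s := r)
        (fun j => by have := hbound j; by_cases hj : t j = 0 <;> simp [r, hj]; omega)
        (by simp [r, hti])
      simp only [ne_eq, Fin.ext_iff, Fin.val_zero, Fin.val_one] at hr0 ⊢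
      omega
    have hedge := hf t r fun j => hβ.pathEdge_of_val (by
      by_cases hj : t j = 0
      · simp [r, hj]
      · have : 0 < (t j).val := Fin.pos_of_ne_zero hj
        simp [r, hj]
        omega)
    rw [hr] at hedge
    have hne := hedge.ne_of_not_loop hβ.not_loop_one
    have := hle hbound (by simp [hti])
    simp only [ne_eq, Fin.ext_iff, Fin.val_zero, Fin.val_one] at hne ⊢
    omega

lemma exists_forall_apply_le [Finite ι] (hβ : Pattern10α01 β) (hf : IsPolymorphism β f)
    (hidem : ∀ v, f (fun _ => v) = v) : ∃ i, ∀ t, f t ≤ t i := by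
  obtain ⟨i, hU⟩ := exists_apply_indicatorTuple_eq_one_iff hβ hf hidem
  refine ⟨i, fun t => ?_⟩
  have h0 : f (shiftDown (t i) t) = 0 :=
    apply_eq_zero_of_eq_zero hβ hf hidem hU (Fin.ext (by simp))
  have := val_apply_le_val_apply_shiftDown_add hβ hf t (t i)
  rw [h0] at this
  exact Fin.le_iff_val_le_val.mpr (by simpa using this)

lemma exists_forall_le_apply [Finite ι] (hβ : Pattern10α01 β) (hf : IsPolymorphism β f)
    (hidem : ∀ v, f (fun _ => v) = v) : ∃ i, ∀ t, t i ≤ f t := by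
  obtain ⟨i, hi⟩ := exists_forall_apply_le hβ.reverse hf.reverse (reverse_const hidem)
  exact ⟨i, fun t => by simpa using hi (Fin.rev ∘ t)⟩

end Pattern

/-- Every idempotent polymorphism, of any arity `k`, of the partially reflexive
path `P_{10α01}` (first vertex looped, second loopless, second-to-last loopless,
last looped, `α` arbitrary in between) is a projection. -/
theorem idempotent_polymorphisms_are_projections
    (n : ℕ) (hn : 4 ≤ n) (β : Fin n → Bool)
    (h0 : β ⟨0, by omega⟩ = true) (h1 : β ⟨1, by omega⟩ = false)
    (h2 : β ⟨n - 2, by omega⟩ = false) (h3 : β ⟨n - 1, by omega⟩ = true)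
    (k : ℕ) (f : (Fin k → Fin n) → Fin n)
    (hpoly : ∀ x y : Fin k → Fin n, (∀ j, pathEdge n β (x j) (y j)) →
      pathEdge n β (f x) (f y))
    (hidem : ∀ v : Fin n, f (fun _ => v) = v) :
    ∃ i : Fin k, ∀ t : Fin k → Fin n, f t = t i := by
  obtain ⟨m, rfl⟩ : ∃ m, n = m + 4 := ⟨n - 4, by omega⟩
  have hβ : Pattern10α01 β := ⟨h0, h1, h2, h3⟩
  obtain ⟨i, hle⟩ := exists_forall_apply_le hβ hpoly hidem
  obtain ⟨i', hge⟩ := exists_forall_le_apply hβ hpoly hidem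
  obtain rfl : i = i' := by
    by_contra hne
    have := (hge (Function.update 0 i' (Fin.rev 0))).trans (hle _)
    simp [Function.update_of_ne hne] at this
  exact ⟨i, fun t => le_antisymm (hle t) (hge t)⟩
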